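/- Let (X,d) be a distance space such that (T_d,d∞) is a metric space (T_d is non-empty and d∞(f,g) < ∞ for all f,g ∈ T_d), and let ρ ∈ M(d) be minimal in M(d) with respect to ⪯. Then there exists a map ψ : X → T_d such that ψ(x) ∈ κ(x) and d∞(ψ(x),ψ(y)) = ρ(x,y) for all x,y ∈ X. -/

import Mathlib

open scoped ENNReal

section CoreDefs

variable {Y : Type*}

/-- A distance space: symmetric, nonnegative, vanishing on the diagonal. -/
def IsDistance (d : Y → Y → ℝ) : Prop :=
  (∀ x y, 0 ≤ d x y) ∧ (∀ x y, d x y = d y x) ∧ ∀ x, d x x = 0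

/-- The set `P_d` of functions dominating the distance `d`. -/
def Pd (d : Y → Y → ℝ) : Set (Y → ℝ) :=
  {f | ∀ x y, d x y ≤ f x + f y}

/-- The tight span `T_d`: pointwise-minimal elements of `P_d`. -/
def Td (d : Y → Y → ℝ) : Set (Y → ℝ) :=
  {f | f ∈ Pd d ∧ ∀ g ∈ Pd d, g ≤ f → g = f}

/-- The sup-distance `d∞(f,g) = sup_x |f x - g x|`, valued in `[0,∞]`. -/
noncomputable def dInfty (f g : Y → ℝ) : ℝ≥0∞ :=
  ⨆ y, edist (f y) (g y)

/-- `κ(x) = {f ∈ T_d : f x = 0}`. -/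
def kappa (d : Y → Y → ℝ) (x : Y) : Set (Y → ℝ) :=
  {f | f ∈ Td d ∧ f x = 0}

/-- A pseudometric: symmetric, nonnegative, vanishing on the diagonal,
satisfying the triangle inequality. -/
def IsPseudometric (ρ : Y → Y → ℝ) : Prop :=
  (∀ x y, 0 ≤ ρ x y) ∧ (∀ x y, ρ x y = ρ y x) ∧ (∀ x, ρ x x = 0) ∧
  ∀ x y z, ρ x z ≤ ρ x y + ρ y z

/-- `M(d)`: the set of pseudometrics dominating `d`. -/
def Md (d : Y → Y → ℝ) : Set (Y → Y → ℝ) :=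
  {ρ | IsPseudometric ρ ∧ ∀ x y, d x y ≤ ρ x y}

end CoreDefs

/-!
Call `F : X → X → ℝ` admissible if each `F x` lies in `P_d`, vanishes at `x`, and
`x ↦ F x` is `ρ`-Lipschitz in the sense `F x ≤ ρ x y + F y`; `ρ` itself is admissible.
Admissibility is preserved by infima of chains, so Zorn gives a minimal admissible `F`.
Minimality forces every `F x` into `T_d`: for `g ∈ P_d` below `F x`, the family
`y ↦ min (F y) (ρ y x + g)` is again admissible, and evaluating it at `x` gives `F x ≤ g`.
Finally `σ x y := d∞(F x, F y)` is a pseudometric with `d ≤ σ ≤ ρ`, so `σ = ρ` by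
minimality of `ρ`, and `ψ := F` works.
-/

lemma le_csInf_apply {ι : Type*} {α : ι → Type*} [∀ i, ConditionallyCompleteLattice (α i)]
    {s : Set (∀ i, α i)} (hne : s.Nonempty) {i : ι} {a : α i} (h : ∀ f ∈ s, a ≤ f i) :
    a ≤ sInf s i := by
  rw [sInf_apply_eq_sInf_image]
  exact le_csInf (hne.image _) (Set.forall_mem_image.2 h)

section TightSpan

variable {X : Type*} {d : X → X → ℝ}

lemma nonneg_of_mem_Pd (hdiag : ∀ x, d x x = 0) {f : X → ℝ} (hf : f ∈ Pd d) (x : X) :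
    0 ≤ f x := by
  linarith [hf x x, hdiag x]

lemma csInf_mem_Pd {s : Set (X → ℝ)} (hne : s.Nonempty) (hchain : IsChain (· ≤ ·) s)
    (hs : s ⊆ Pd d) : sInf s ∈ Pd d := by
  intro x y
  have key : ∀ f ∈ s, d x y - sInf s y ≤ f x := fun f hf => by
    have : d x y - f x ≤ sInf s y := le_csInf_apply hne fun g hg => by
      rcases hchain.total hf hg with hfg | hgf
      · linarith [hs hf x y, hfg y]
      · linarith [hs hg x y, hgf x]
    linarith
  linarith [le_csInf_apply hne key]

lemma min_add_mem_Pd {f g : X → ℝ} {c : ℝ} (hf : f ∈ Pd d) (hg : g ∈ Pd d) (hc : 0 ≤ c)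
    (hgf : g ≤ fun z => c + f z) : (fun z => min (f z) (c + g z)) ∈ Pd d := by
  intro x y
  rcases min_cases (f x) (c + g x) with ⟨hx, -⟩ | ⟨hx, -⟩ <;>
    rcases min_cases (f y) (c + g y) with ⟨hy, -⟩ | ⟨hy, -⟩ <;>
    simp only [hx, hy]
  · exact hf x y
  all_goals linarith [hg x y, hgf x, hgf y]

end TightSpan

section SupDistance

variable {Y : Type*} {f g : Y → ℝ}

lemma dInfty_comm (f g : Y → ℝ) : dInfty f g = dInfty g f := by
  simp only [dInfty, edist_comm]

lemma dInfty_self (f : Y → ℝ) : dInfty f f = 0 := by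
  simp [dInfty]

lemma dInfty_triangle (f g h : Y → ℝ) : dInfty f h ≤ dInfty f g + dInfty g h :=
  iSup_le fun y => (edist_triangle _ (g y) _).trans <|
    add_le_add (le_iSup (fun y => edist (f y) (g y)) y) (le_iSup (fun y => edist (g y) (h y)) y)

lemma abs_sub_le_toReal_dInfty (hfg : dInfty f g ≠ ⊤) (y : Y) :
    |f y - g y| ≤ (dInfty f g).toReal := by
  rw [← ENNReal.ofReal_le_iff_le_toReal hfg, ← Real.dist_eq, ← edist_dist]
  exact le_iSup (fun y => edist (f y) (g y)) y

lemma dInfty_le_ofReal {r : ℝ} (h : ∀ y, |f y - g y| ≤ r) : dInfty f g ≤ ENNReal.ofReal r :=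
  iSup_le fun y => by
    rw [edist_dist, Real.dist_eq]
    exact ENNReal.ofReal_le_ofReal (h y)

lemma isPseudometric_toReal_dInfty {X : Type*} (F : X → Y → ℝ)
    (hF : ∀ x y, dInfty (F x) (F y) ≠ ⊤) :
    IsPseudometric fun x y => (dInfty (F x) (F y)).toReal := by
  refine ⟨fun _ _ => ENNReal.toReal_nonneg, fun x y => by dsimp only; rw [dInfty_comm],
    fun x => by simp [dInfty_self], fun x y z => ?_⟩
  rw [← ENNReal.toReal_add (hF x y) (hF y z)]
  exact ENNReal.toReal_mono (ENNReal.add_ne_top.2 ⟨hF x y, hF y z⟩) (dInfty_triangle _ _ _)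

end SupDistance

section AdmissibleFamily

variable {X : Type*} {d ρ : X → X → ℝ}

structure IsAdmissibleFamily (d ρ : X → X → ℝ) (F : X → X → ℝ) : Prop where
  mem_Pd : ∀ x, F x ∈ Pd d
  apply_self : ∀ x, F x x = 0
  le_add : ∀ x y z, F x z ≤ ρ x y + F y z

lemma isAdmissibleFamily_of_mem_Md (hρ : ρ ∈ Md d) : IsAdmissibleFamily d ρ ρ where
  mem_Pd x z w := by
    obtain ⟨⟨-, hsymm, -, htri⟩, hdρ⟩ := hρ
    linarith [hdρ z w, htri z x w, hsymm z x]
  apply_self := hρ.1.2.2.1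
  le_add := hρ.1.2.2.2

namespace IsAdmissibleFamily

variable {F : X → X → ℝ}

lemma nonneg (hdiag : ∀ x, d x x = 0) (hF : IsAdmissibleFamily d ρ F) (x z : X) :
    0 ≤ F x z :=
  nonneg_of_mem_Pd hdiag (hF.mem_Pd x) z

lemma le_apply (hF : IsAdmissibleFamily d ρ F) (x y : X) : d x y ≤ F x y := by
  linarith [hF.mem_Pd x x y, hF.apply_self x]

lemma dInfty_le (hρsymm : ∀ x y, ρ x y = ρ y x) (hF : IsAdmissibleFamily d ρ F) (x y : X) :
    dInfty (F x) (F y) ≤ ENNReal.ofReal (ρ x y) :=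
  dInfty_le_ofReal fun z => abs_sub_le_iff.2
    ⟨by linarith [hF.le_add x y z], by linarith [hF.le_add y x z, hρsymm x y]⟩

end IsAdmissibleFamily

lemma isAdmissibleFamily_csInf (hdiag : ∀ x, d x x = 0) {c : Set (X → X → ℝ)}
    (hne : c.Nonempty) (hchain : IsChain (· ≤ ·) c) (hc : ∀ F ∈ c, IsAdmissibleFamily d ρ F) :
    IsAdmissibleFamily d ρ (sInf c) := by
  have hbdd : BddBelow c := ⟨0, fun F hF x z => (hc F hF).nonneg hdiag x z⟩
  have hle : ∀ F ∈ c, ∀ x z, sInf c x z ≤ F x z := fun F hF x z => csInf_le hbdd hF x z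
  have hge : ∀ x z r, (∀ F ∈ c, r ≤ F x z) → r ≤ sInf c x z := fun x z r h => by
    rw [sInf_apply_eq_sInf_image]
    refine le_csInf_apply (hne.image (Function.eval x)) ?_
    rintro _ ⟨F, hF, rfl⟩
    exact h F hF
  obtain ⟨F₀, hF₀⟩ := hne
  refine ⟨fun x => ?_, fun x => ?_, fun x y z => ?_⟩
  · rw [sInf_apply_eq_sInf_image]
    refine csInf_mem_Pd ⟨_, F₀, hF₀, rfl⟩ ((Function.monotone_eval x).isChain_image hchain) ?_
    rintro _ ⟨F, hF, rfl⟩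
    exact (hc F hF).mem_Pd x
  · exact le_antisymm ((hle F₀ hF₀ x x).trans_eq ((hc F₀ hF₀).apply_self x))
      (hge x x 0 fun F hF => (hc F hF).nonneg hdiag x x)
  · have := hge y z (sInf c x z - ρ x y) fun F hF => by
      linarith [hle F hF x z, (hc F hF).le_add x y z]
    linarith

lemma exists_minimal_isAdmissibleFamily (hdiag : ∀ x, d x x = 0) (hρ : ρ ∈ Md d) :
    ∃ F, Minimal (IsAdmissibleFamily d ρ) F := by
  let S : Set (X → X → ℝ)ᵒᵈ := {F | IsAdmissibleFamily d ρ (OrderDual.ofDual F)}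
  have hchains : ∀ c ⊆ S, IsChain (· ≤ ·) c → ∃ lb ∈ S, ∀ F ∈ c, F ≤ lb := by
    intro c hc hchain
    rcases c.eq_empty_or_nonempty with rfl | hne
    · exact ⟨OrderDual.toDual ρ, isAdmissibleFamily_of_mem_Md hρ, by simp⟩
    let c' : Set (X → X → ℝ) := OrderDual.toDual ⁻¹' c
    have hbdd : BddBelow c' := ⟨0, fun G hG x z => (hc hG).nonneg hdiag x z⟩
    exact ⟨OrderDual.toDual (sInf c'), isAdmissibleFamily_csInf hdiag hne hchain.symm hc,
      fun G hG => csInf_le hbdd hG⟩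
  obtain ⟨F, hF⟩ := zorn_le₀ S hchains
  exact ⟨OrderDual.ofDual F, maximal_toDual.1 hF⟩

lemma mem_Td_of_minimal_isAdmissibleFamily (hdiag : ∀ x, d x x = 0) (hρ : IsPseudometric ρ)
    {F : X → X → ℝ} (hF : Minimal (IsAdmissibleFamily d ρ) F) (x : X) : F x ∈ Td d := by
  obtain ⟨hρ0, hρsymm, hρself, hρtri⟩ := hρ
  have hadm := hF.prop
  refine ⟨hadm.mem_Pd x, fun g hg hgF => ?_⟩
  let G : X → X → ℝ := fun y z => min (F y z) (ρ y x + g z)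
  have hGadm : IsAdmissibleFamily d ρ G := by
    refine ⟨fun y => min_add_mem_Pd (hadm.mem_Pd y) hg (hρ0 y x) fun z => ?_, fun y => ?_,
      fun y y' z => ?_⟩
    · linarith [hgF z, hadm.le_add x y z, hρsymm x y]
    · simp only [G, hadm.apply_self y]
      exact min_eq_left (add_nonneg (hρ0 y x) (nonneg_of_mem_Pd hdiag hg y))
    · rcases min_cases (F y' z) (ρ y' x + g z) with ⟨h, -⟩ | ⟨h, -⟩ <;> simp only [G, h]
      · exact (min_le_left _ _).trans (hadm.le_add y y' z)
      · exact (min_le_right _ _).trans (by linarith [hρtri y y' x])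
  have hGF : G = F := hF.eq_of_le hGadm fun y z => min_le_left _ _
  refine le_antisymm hgF fun z => ?_
  have : F x z ≤ ρ x x + g z := hGF ▸ min_le_right (F x z) (ρ x x + g z)
  linarith [hρself x]

end AdmissibleFamily

theorem statement10_general {X : Type*} (d : X → X → ℝ)
    (hd : IsDistance d)
    (ρ : X → X → ℝ) (hρ : ρ ∈ Md d)
    (hmin : ∀ ρ' ∈ Md d, ρ' ≤ ρ → ρ' = ρ) :
    ∃ ψ : X → (X → ℝ),
      (∀ x, ψ x ∈ kappa d x) ∧
      ∀ x y, dInfty (ψ x) (ψ y) = ENNReal.ofReal (ρ x y) := by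
  obtain ⟨-, -, hdiag⟩ := hd
  obtain ⟨F, hF⟩ := exists_minimal_isAdmissibleFamily hdiag hρ
  have hbound := hF.prop.dInfty_le hρ.1.2.1
  have hfin : ∀ x y, dInfty (F x) (F y) ≠ ⊤ :=
    fun x y => ne_top_of_le_ne_top ENNReal.ofReal_ne_top (hbound x y)
  set σ : X → X → ℝ := fun x y => (dInfty (F x) (F y)).toReal
  have hσ : σ ∈ Md d := ⟨isPseudometric_toReal_dInfty F hfin, fun x y =>
    (hF.prop.le_apply x y).trans <| by
      simpa [hF.prop.apply_self y, abs_of_nonneg (hF.prop.nonneg hdiag x y)]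
        using abs_sub_le_toReal_dInfty (hfin x y) y⟩
  have hσρ : σ = ρ := hmin σ hσ fun x y =>
    ENNReal.toReal_le_of_le_ofReal (hρ.1.1 x y) (hbound x y)
  refine ⟨F, fun x => ⟨mem_Td_of_minimal_isAdmissibleFamily hdiag hρ.1 hF x,
    hF.prop.apply_self x⟩, fun x y => ?_⟩
  rw [← hσρ, ENNReal.ofReal_toReal (hfin x y)]

/-- If `(T_d, d∞)` is a metric space and `ρ` is minimal in `M(d)`, then there
is `ψ : X → T_d` with `ψ x ∈ κ(x)` and `d∞(ψ x, ψ y) = ρ x y`. -/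
theorem statement10 {X : Type*} [Nonempty X] (d : X → X → ℝ)
    (hd : IsDistance d) (hne : (Td d).Nonempty)
    (hfin : ∀ f ∈ Td d, ∀ g ∈ Td d, dInfty f g ≠ ⊤)
    (ρ : X → X → ℝ) (hρ : ρ ∈ Md d)
    (hmin : ∀ ρ' ∈ Md d, ρ' ≤ ρ → ρ' = ρ) :
    ∃ ψ : X → (X → ℝ),
      (∀ x, ψ x ∈ kappa d x) ∧
      ∀ x y, dInfty (ψ x) (ψ y) = ENNReal.ofReal (ρ x y) :=
  statement10_general d hd ρ hρ hmin
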